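/- Let G ⊆ O(n) be a finite group acting faithfully on a finite set V ⊆ ℝⁿ in the sense that if g v = v for all v ∈ V then g = 1. Fix an enumeration v₁, …, v_m of V and define Q = {x ∈ ℝⁿ | for each k, dist(x, v_k) ≤ dist(x, g v_k) for all g ∈ G_{k-1}}, where G₀ = G and G_k = {g ∈ G_{k-1} | g v_k = v_k}. Then for every y in the interior of Q (meaning all the defining inequalities are strict) and every g ∈ G with g y ≠ y, we have g y ∉ Q. -/
import Mathlib


theorem stmt_4 (n m : ℕ)
    (G : Subgroup (EuclideanSpace ℝ (Fin n) ≃ₗᵢ[ℝ] EuclideanSpace ℝ (Fin n)))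
    (hG : Finite G)
    (v : Fin m → EuclideanSpace ℝ (Fin n))
    (hact : ∀ g ∈ G, (fun x => g x) '' Set.range v = Set.range v)
    (hfaith : ∀ g ∈ G, (∀ k, g (v k) = v k) → g = 1)
    (C : ℕ → Set (EuclideanSpace ℝ (Fin n) ≃ₗᵢ[ℝ] EuclideanSpace ℝ (Fin n)))
    (hC0 : C 0 = (G : Set _))
    (hCsucc : ∀ k : Fin m, C (k + 1) = {g ∈ C k | g (v k) = v k}) :
    ∀ y ∈ {x : EuclideanSpace ℝ (Fin n) |
        ∀ k : Fin m, ∀ g ∈ C k, g (v k) ≠ v k → dist x (v k) < dist x (g (v k))},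
      ∀ g ∈ G, g y ≠ y →
        g y ∉ {x : EuclideanSpace ℝ (Fin n) |
          ∀ k : Fin m, ∀ g' ∈ C k, dist x (v k) ≤ dist x (g' (v k))} := by
  intro y hy g hgG hgy hgyQ
  simp only [Set.mem_setOf_eq] at hy hgyQ
  -- key: for all j ≤ m, g and g⁻¹ are in C j, and g fixes v k for k < j
  have key : ∀ j : ℕ, j ≤ m → g ∈ C j ∧ g⁻¹ ∈ C j := by
    intro j
    induction j with
    | zero => intro _; rw [hC0]; exact ⟨hgG, G.inv_mem hgG⟩
    | succ j ih =>
      intro hjm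
      have hj : j < m := hjm
      have ⟨hg, hginv⟩ := ih (le_of_lt hj)
      set k : Fin m := ⟨j, hj⟩ with hk
      have hfix : g (v k) = v k := by
        by_contra hne
        have hne' : g⁻¹ (v k) ≠ v k := by
          intro h
          apply hne
          have := congrArg g h
          rw [show ∀ x, g (g⁻¹ x) = x from fun x => g.apply_symm_apply x] at this
          exact this.symm
        have h1 : dist y (v k) < dist y (g⁻¹ (v k)) := hy k g⁻¹ hginv hne'
        have h2 : dist (g y) (v k) ≤ dist (g y) (g (v k)) := hgyQ k g hg
        have e1 : dist (g y) (g (v k)) = dist y (v k) := g.dist_map y (v k)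
        have e2 : dist (g y) (v k) = dist y (g⁻¹ (v k)) := by
          conv_lhs => rw [show v k = g (g⁻¹ (v k)) from (g.apply_symm_apply (v k)).symm]
          exact g.dist_map y (g⁻¹ (v k))
        rw [e1, e2] at h2
        exact absurd h2 (not_le.mpr h1)
      have hcs := hCsucc k
      simp only [hk] at hcs
      refine ⟨?_, ?_⟩ <;> rw [show (j : ℕ) + 1 = ((k : ℕ) + 1) from rfl, hcs]
      · exact ⟨hg, hfix⟩
      · refine ⟨hginv, ?_⟩
        have h := g.symm_apply_apply (v k)
        rw [hfix] at h
        exact h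
  have hfixall : ∀ k : Fin m, g (v k) = v k := by
    intro k
    have h := (key (k + 1) k.2).1
    rw [hCsucc k] at h
    exact h.2
  exact hgy (by rw [hfaith g hgG hfixall]; rfl)
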